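/- Let X be a binary string, let X = X_1 X_2 ⋯ X_ℓ be an arbitrary partition of X into ℓ consecutive blocks, and let X = X^b_1 X^b_2 ⋯ X^b_m be a partition of X into m consecutive blocks each of length at most b. Then ∑_{i=1}^{m} |X^b_i|·H_0(X^b_i) ≤ ∑_{i=1}^{ℓ} |X_i|·H_0(X_i) + (ℓ − 1)·b. -/

import Mathlib

/-!
`|Y|·H₀(Y)` is `t ↦ t·h(x/t)` for the binary entropy `h`, the perspective of a concave function,
so it is nonnegative, at most `|Y|`, and superadditive under concatenation. Cut `Q` at the
boundaries of `P`: the blocks of `Q` lying inside some `X_i` contribute at most `|X_i|·H₀(X_i)`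
by superadditivity, and each of the at most `ℓ − 1` blocks straddling a boundary contributes
at most its length, hence at most `b`.
-/

/-- The 0-th order empirical entropy of a binary string `Y` of length `t`
containing `x` ones: `H₀(Y) = (x/t)·log₂(t/x) + ((t−x)/t)·log₂(t/(t−x))`
(the conventions `0·log₂(y/0) = 0` and `H₀(ε) = 0` hold automatically). -/
noncomputable def binH0 (Y : List Bool) : ℝ :=
  ((Y.count true : ℝ) / (Y.length : ℝ)) *
      Real.logb 2 ((Y.length : ℝ) / (Y.count true : ℝ)) +
    (((Y.length : ℝ) - (Y.count true : ℝ)) / (Y.length : ℝ)) *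
      Real.logb 2 ((Y.length : ℝ) / ((Y.length : ℝ) - (Y.count true : ℝ)))

open Real

theorem ConcaveOn.mul_add_mul_le_perspective {s : Set ℝ} {f : ℝ → ℝ} (hf : ConcaveOn ℝ s f)
    {t₁ t₂ u₁ u₂ : ℝ} (ht₁ : 0 ≤ t₁) (ht₂ : 0 ≤ t₂) (hu₁ : u₁ ∈ s) (hu₂ : u₂ ∈ s) :
    t₁ * f u₁ + t₂ * f u₂ ≤ (t₁ + t₂) * f ((t₁ * u₁ + t₂ * u₂) / (t₁ + t₂)) := by
  rcases (add_nonneg ht₁ ht₂).eq_or_lt with hT | hT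
  · obtain ⟨rfl, rfl⟩ : t₁ = 0 ∧ t₂ = 0 := ⟨by linarith, by linarith⟩
    simp
  have hconc := hf.2 hu₁ hu₂ (div_nonneg ht₁ hT.le) (div_nonneg ht₂ hT.le)
    (by field_simp)
  simp only [smul_eq_mul] at hconc
  calc t₁ * f u₁ + t₂ * f u₂
      = (t₁ + t₂) * (t₁ / (t₁ + t₂) * f u₁ + t₂ / (t₁ + t₂) * f u₂) := by field_simp
    _ ≤ (t₁ + t₂) * f (t₁ / (t₁ + t₂) * u₁ + t₂ / (t₁ + t₂) * u₂) := by gcongr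
    _ = (t₁ + t₂) * f ((t₁ * u₁ + t₂ * u₂) / (t₁ + t₂)) := by congr 2; field_simp

section Superadditive

variable {α : Type*} {E : List α → ℝ}

theorem List.sum_map_le_apply_flatten (hE₀ : 0 ≤ E []) (hE : ∀ Y Z, E Y + E Z ≤ E (Y ++ Z)) :
    ∀ L : List (List α), (L.map E).sum ≤ E L.flatten
  | [] => hE₀
  | B :: L =>
    calc E B + (L.map E).sum
      _ ≤ E B + E L.flatten := by gcongr; exact List.sum_map_le_apply_flatten hE₀ hE L
      _ ≤ E (B ++ L.flatten) := hE _ _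

/-- The blocks of `Q` covering a prefix `A` cost at most `E A + c`, the `c` paying for the block
that straddles the end of `A`; the rest of that block starts the partition `Q'` of the suffix. -/
theorem List.exists_flatten_eq_sum_map_le (hE₀ : ∀ Y, 0 ≤ E Y)
    (hE : ∀ Y Z, E Y + E Z ≤ E (Y ++ Z)) {c : ℝ} (hc : 0 ≤ c) :
    ∀ (Q : List (List α)) (A Y : List α), Q.flatten = A ++ Y → (∀ B ∈ Q, E B ≤ c) →
      ∃ Q' : List (List α), Q'.flatten = Y ∧ (∀ B ∈ Q', E B ≤ c) ∧
        (Q.map E).sum ≤ E A + c + (Q'.map E).sum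
  | [], A, Y, hQ, _ => by
    obtain ⟨rfl, rfl⟩ := List.append_eq_nil_iff.mp hQ.symm
    exact ⟨[], rfl, by simp, by simpa using add_nonneg (hE₀ []) hc⟩
  | B :: Q, A, Y, hQ, hQc => by
    have hBc : E B ≤ c := hQc B List.mem_cons_self
    rcases List.append_eq_append_iff.mp hQ with ⟨A', rfl, hA'⟩ | ⟨C, rfl, rfl⟩
    · obtain ⟨Q', hQ'Y, hQ'c, hsum⟩ := List.exists_flatten_eq_sum_map_le hE₀ hE hc Q A' Y hA'
        (fun B hB => hQc B (List.mem_cons_of_mem _ hB))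
      refine ⟨Q', hQ'Y, hQ'c, ?_⟩
      simp only [List.map_cons, List.sum_cons]
      linarith [hE B A']
    · refine ⟨C :: Q, rfl, ?_, ?_⟩
      · rintro B (_ | ⟨_, hB⟩)
        · linarith [hE A C, hE₀ A]
        · exact hQc B (List.mem_cons_of_mem _ hB)
      · simp only [List.map_cons, List.sum_cons]
        linarith [hE₀ A, hE₀ C]

theorem List.sum_map_le_sum_map_add_of_flatten_eq (hE₀ : ∀ Y, 0 ≤ E Y)
    (hE : ∀ Y Z, E Y + E Z ≤ E (Y ++ Z)) {c : ℝ} (hc : 0 ≤ c) :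
    ∀ P Q : List (List α), Q.flatten = P.flatten → (∀ B ∈ Q, E B ≤ c) →
      (Q.map E).sum ≤ (P.map E).sum + ((P.length - 1 : ℕ) : ℝ) * c
  | [], Q, hQ, _ => by
    have hnil : E [] ≤ 0 := by simpa using hE [] []
    have := List.sum_map_le_apply_flatten (hE₀ []) hE Q
    rw [hQ] at this
    simpa using this.trans hnil
  | [A], Q, hQ, _ => by
    simpa [hQ] using List.sum_map_le_apply_flatten (hE₀ []) hE Q
  | A :: A' :: P, Q, hQ, hQc => by
    obtain ⟨Q', hQ', hQ'c, hsum⟩ :=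
      List.exists_flatten_eq_sum_map_le hE₀ hE hc Q A _ (hQ.trans List.flatten_cons) hQc
    have ih := List.sum_map_le_sum_map_add_of_flatten_eq hE₀ hE hc (A' :: P) Q' hQ' hQ'c
    simp only [List.map_cons, List.sum_cons, List.length_cons, Nat.add_sub_cancel] at ih hsum ⊢
    push_cast at ih ⊢
    linarith

end Superadditive

noncomputable def onesFrac (Y : List Bool) : ℝ := Y.count true / Y.length

theorem onesFrac_mem_Icc (Y : List Bool) : onesFrac Y ∈ Set.Icc 0 1 :=
  ⟨by unfold onesFrac; positivity,
    div_le_one_of_le₀ (by exact_mod_cast List.count_le_length) (Nat.cast_nonneg _)⟩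

theorem length_mul_onesFrac (Y : List Bool) : Y.length * onesFrac Y = Y.count true := by
  rcases eq_or_ne Y [] with rfl | hY
  · simp [onesFrac]
  · exact mul_div_cancel₀ _ (by simpa using hY)

theorem binH0_eq_binEntropy (Y : List Bool) : binH0 Y = binEntropy (onesFrac Y) / log 2 := by
  rcases eq_or_ne Y [] with rfl | hY
  · simp [binH0, onesFrac]
  have ht : (Y.length : ℝ) ≠ 0 := by simpa using hY
  simp only [binH0, onesFrac, binEntropy, logb, one_sub_div ht, inv_div]
  ring

theorem length_mul_binH0_eq (Y : List Bool) :
    Y.length * binH0 Y = Y.length * binEntropy (onesFrac Y) / log 2 := by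
  rw [binH0_eq_binEntropy, mul_div_assoc]

theorem length_mul_binH0_nonneg (Y : List Bool) : 0 ≤ Y.length * binH0 Y := by
  rw [length_mul_binH0_eq]
  have := binEntropy_nonneg (onesFrac_mem_Icc Y).1 (onesFrac_mem_Icc Y).2
  positivity

theorem length_mul_binH0_le_length (Y : List Bool) : Y.length * binH0 Y ≤ Y.length := by
  rw [length_mul_binH0_eq, div_le_iff₀ (log_pos one_lt_two)]
  exact mul_le_mul_of_nonneg_left binEntropy_le_log_two (Nat.cast_nonneg _)

theorem length_mul_binH0_add_le (Y Z : List Bool) :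
    Y.length * binH0 Y + Z.length * binH0 Z ≤ (Y ++ Z).length * binH0 (Y ++ Z) := by
  have hfrac : onesFrac (Y ++ Z) =
      (Y.length * onesFrac Y + Z.length * onesFrac Z) / (Y.length + Z.length) := by
    rw [length_mul_onesFrac, length_mul_onesFrac, onesFrac]
    push_cast [List.count_append, List.length_append]
    rfl
  rw [length_mul_binH0_eq, length_mul_binH0_eq, length_mul_binH0_eq, ← add_div, hfrac,
    List.length_append, Nat.cast_add]
  gcongr
  exact strictConcave_binEntropy.concaveOn.mul_add_mul_le_perspective (Nat.cast_nonneg _)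
    (Nat.cast_nonneg _) (onesFrac_mem_Icc Y) (onesFrac_mem_Icc Z)

/-- Let `X = X_1 ⋯ X_ℓ` be an arbitrary partition of a binary string `X` into
`ℓ` consecutive blocks, and let `X = X^b_1 ⋯ X^b_m` be a partition of `X` into
blocks of length at most `b`.  Then
`∑ᵢ |X^b_i|·H₀(X^b_i) ≤ ∑ᵢ |X_i|·H₀(X_i) + (ℓ − 1)·b`. -/
theorem stmt15 (b : ℕ) (X : List Bool) (P Q : List (List Bool))
    (hP : P.flatten = X) (hQ : Q.flatten = X)
    (hb : ∀ B ∈ Q, B.length ≤ b) :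
    (Q.map fun B => (B.length : ℝ) * binH0 B).sum ≤
      (P.map fun B => (B.length : ℝ) * binH0 B).sum +
        ((P.length - 1 : ℕ) : ℝ) * (b : ℝ) :=
  List.sum_map_le_sum_map_add_of_flatten_eq length_mul_binH0_nonneg length_mul_binH0_add_le
    (Nat.cast_nonneg b) P Q (hQ.trans hP.symm)
    fun B hB => (length_mul_binH0_le_length B).trans (by exact_mod_cast hb B hB)
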